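/- Let d > 0 and g ≥ 1 be real, and let Q = [[-1,0,0,-d],[d,-1,0,0],[0,d,-1,0],[0,0,d,-g]]. If d < √2, then the symmetric part Q_s = (1/2)(Q + Qᵀ) is negative definite. -/

import Mathlib

/-!
Writing `s = z₀ + z₂`, `t = z₂ - z₀`, completing the squares in `z₁` and `z₃` gives
`4 zᵀ Q z = -(2z₁ - d s)² - (2z₃ - d t)² - 2(2 - d²)(z₀² + z₂²) - 4(g - 1) z₃²`,
because `s² + t² = 2(z₀² + z₂²)`. For `d² < 2` and `g ≥ 1` every term is nonpositive, and
they vanish together only at `z = 0`.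
-/

open Matrix

theorem dotProduct_half_smul_add_transpose_mulVec {R n : Type*} [Field R] [CharZero R]
    [Fintype n] (A : Matrix n n R) (z : n → R) :
    z ⬝ᵥ (((1 : R) / 2) • (A + Aᵀ)) *ᵥ z = z ⬝ᵥ A *ᵥ z := by
  have htrans : z ⬝ᵥ Aᵀ *ᵥ z = z ⬝ᵥ A *ᵥ z := by
    rw [dotProduct_mulVec, vecMul_transpose, dotProduct_comm]
  rw [smul_mulVec, dotProduct_smul, add_mulVec, dotProduct_add, htrans, smul_eq_mul]
  ring

def Q (d g : ℝ) : Matrix (Fin 4) (Fin 4) ℝ :=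
  !![-1, 0, 0, -d;
     d, -1, 0, 0;
     0, d, -1, 0;
     0, 0, d, -g]

theorem four_mul_dotProduct_Q_mulVec (d g : ℝ) (z : Fin 4 → ℝ) :
    4 * (z ⬝ᵥ Q d g *ᵥ z) =
      -(2 * z 1 - d * (z 0 + z 2)) ^ 2 - (2 * z 3 - d * (z 2 - z 0)) ^ 2
        - 2 * (2 - d ^ 2) * (z 0 ^ 2 + z 2 ^ 2) - 4 * (g - 1) * z 3 ^ 2 := by
  simp only [Q, dotProduct, mulVec, Fin.sum_univ_four, of_apply, cons_val', cons_val_fin_one,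
    cons_val_zero, cons_val_one, cons_val]
  ring

theorem dotProduct_Q_mulVec_neg {d g : ℝ} (hd : d ^ 2 < 2) (hg : 1 ≤ g) {z : Fin 4 → ℝ}
    (hz : z ≠ 0) : z ⬝ᵥ Q d g *ᵥ z < 0 := by
  have hsq := four_mul_dotProduct_Q_mulVec d g z
  by_contra! hnonneg
  apply hz
  have hg3 : 0 ≤ 4 * (g - 1) * z 3 ^ 2 := by
    have := sub_nonneg.mpr hg
    positivity
  have h02 : z 0 ^ 2 + z 2 ^ 2 = 0 := by
    nlinarith [sq_nonneg (2 * z 1 - d * (z 0 + z 2)), sq_nonneg (2 * z 3 - d * (z 2 - z 0)),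
      sq_nonneg (z 0), sq_nonneg (z 2)]
  have h0 : z 0 = 0 := by nlinarith [sq_nonneg (z 0), sq_nonneg (z 2)]
  have h2 : z 2 = 0 := by nlinarith [sq_nonneg (z 0), sq_nonneg (z 2)]
  rw [h0, h2] at hsq
  have h1 : z 1 = 0 := by nlinarith [sq_nonneg (z 1), sq_nonneg (z 3)]
  have h3 : z 3 = 0 := by nlinarith [sq_nonneg (z 1), sq_nonneg (z 3)]
  ext i
  fin_cases i <;> assumption

theorem Q_symmetric_part_negdef (d g : ℝ) (hd : 0 < d) (hg : 1 ≤ g)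
    (hd2 : d < Real.sqrt 2) :
    ∀ z : Fin 4 → ℝ, z ≠ 0 →
      z ⬝ᵥ ((((1:ℝ)/2) • (!![(-1 : ℝ), 0, 0, -d;
                             d, -1, 0, 0;
                             0, d, -1, 0;
                             0, 0, d, -g]
          + !![(-1 : ℝ), 0, 0, -d;
               d, -1, 0, 0;
               0, d, -1, 0;
               0, 0, d, -g]ᵀ)) *ᵥ z) < 0 := by
  intro z hz
  change z ⬝ᵥ (((1 : ℝ) / 2) • (Q d g + (Q d g)ᵀ)) *ᵥ z < 0
  rw [dotProduct_half_smul_add_transpose_mulVec]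
  exact dotProduct_Q_mulVec_neg ((Real.lt_sqrt hd.le).1 hd2) hg hz
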